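/- arXiv:2008.08654 — 2 statements merged into one kernel-verified Lean document; each statement's English description precedes it below -/
import Mathlib

section
/- Let r and b be positive integers with r ≤ 2^b. The map v ↦ ⌊(v+1)·r/2^b⌋ from [2^b − 1] to [r] is most uniform: for every i ∈ [r], the number of v ∈ [2^b − 1] with ⌊(v+1)·r/2^b⌋ = i is either ⌊(2^b − 1)/r⌋ or ⌈(2^b − 1)/r⌉. -/
/-!
Write `N = 2 ^ b`. Through `w = v + 1`, the fiber of `i` consists of the `w ∈ [1, N)` with
`i N ≤ w r < (i + 1) N`, i.e. of the integers in `[⌈i N / r⌉, ⌈(i + 1) N / r⌉)`, cut at `1` when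
`i = 0`. For `i = 0` this leaves exactly `⌊(N - 1) / r⌋` points. For `i > 0` the count
`⌈(i + 1) N / r⌉ - ⌈i N / r⌉` is at least `⌊N / r⌋` by superadditivity of rounding, and at most
`⌈(N - 1) / r⌉` because `(i + 1) N = i N + (N - 1) + 1` and the two roundings up of `i N / r` and
`(N - 1) / r` cannot both be exact: `r ∣ i N` and `r ∣ N - 1` would give `r ∣ i`.
-/

open Finset

namespace Nat

variable {a b r : ℕ}

lemma le_mul_ceilDiv (hr : 0 < r) (a : ℕ) : a ≤ r * (a ⌈/⌉ r) :=
  (ceilDiv_le_iff_le_mul hr).1 le_rfl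

lemma lt_ceilDiv_iff_mul_lt (hr : 0 < r) : b < a ⌈/⌉ r ↔ r * b < a := by
  simpa using (ceilDiv_le_iff_le_mul hr (b := a) (c := b)).not

lemma ceilDiv_le_div_add_one (hr : 0 < r) (a : ℕ) : a ⌈/⌉ r ≤ a / r + 1 := by
  rw [ceilDiv_eq_add_pred_div, ← Nat.add_div_right _ hr]
  exact Nat.div_le_div_right (by omega)

lemma ceilDiv_add_div_le_ceilDiv_add (hr : 0 < r) (a b : ℕ) :
    a ⌈/⌉ r + b / r ≤ (a + b) ⌈/⌉ r := by
  rw [ceilDiv_eq_add_pred_div, ceilDiv_eq_add_pred_div]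
  exact div_add_div_le_add_div.trans_eq (by congr 1; omega)

lemma lt_mul_ceilDiv_of_not_dvd (hr : 0 < r) (ha : ¬ r ∣ a) : a < r * (a ⌈/⌉ r) :=
  (le_mul_ceilDiv hr a).lt_of_ne fun h => ha ⟨_, h⟩

lemma div_eq_iff_ceilDiv_le_and_lt (hr : 0 < r) {N w i : ℕ} (hN : 0 < N) :
    w * r / N = i ↔ i * N ⌈/⌉ r ≤ w ∧ w < (i + 1) * N ⌈/⌉ r := by
  rw [ceilDiv_le_iff_le_mul hr, lt_ceilDiv_iff_mul_lt hr, mul_comm r w,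
    ← Nat.le_div_iff_mul_le hN, ← Nat.div_lt_iff_lt_mul hN]
  omega

end Nat

section Fiber

variable {N r i : ℕ}

lemma card_filter_range_succ_mul_div_eq (hr : 0 < r) (hN : 0 < N) (hi : i < r) :
    ((range (N - 1)).filter fun v => (v + 1) * r / N = i).card
      = (i + 1) * N ⌈/⌉ r - max 1 (i * N ⌈/⌉ r) := by
  have htop : (i + 1) * N ⌈/⌉ r ≤ N := (ceilDiv_le_iff_le_mul hr).2 (by nlinarith)
  have hfiber : (range (N - 1)).filter (fun v => (v + 1) * r / N = i)
      = Ico (max 1 (i * N ⌈/⌉ r) - 1) ((i + 1) * N ⌈/⌉ r - 1) := by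
    ext v
    simp only [mem_filter, mem_range, mem_Ico, Nat.div_eq_iff_ceilDiv_le_and_lt hr hN]
    omega
  rw [hfiber, Nat.card_Ico]
  omega

lemma div_le_ceilDiv_succ_mul_sub_ceilDiv_mul (hr : 0 < r) :
    (N - 1) / r ≤ (i + 1) * N ⌈/⌉ r - i * N ⌈/⌉ r := by
  have h₁ := Nat.ceilDiv_add_div_le_ceilDiv_add hr (i * N) N
  have h₂ : (N - 1) / r ≤ N / r := Nat.div_le_div_right (Nat.sub_le N 1)
  rw [← add_one_mul] at h₁
  omega

lemma ceilDiv_succ_mul_sub_ceilDiv_mul_le (hN : 0 < N) (hi₀ : 0 < i) (hi : i < r) :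
    (i + 1) * N ⌈/⌉ r - i * N ⌈/⌉ r ≤ (N - 1) ⌈/⌉ r := by
  have hr : 0 < r := hi₀.trans hi
  obtain ⟨M, rfl⟩ : ∃ M, N = M + 1 := Nat.exists_eq_succ_of_ne_zero hN.ne'
  suffices (i + 1) * (M + 1) ≤ r * (i * (M + 1) ⌈/⌉ r + M ⌈/⌉ r) by
    have := (ceilDiv_le_iff_le_mul hr).2 this
    simp only [Nat.add_sub_cancel]
    omega
  have hstrict : i * (M + 1) < r * (i * (M + 1) ⌈/⌉ r) ∨ M < r * (M ⌈/⌉ r) := by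
    by_cases h : r ∣ i * (M + 1)
    · refine .inr (Nat.lt_mul_ceilDiv_of_not_dvd hr fun hM => ?_)
      have hri : r ∣ i := by simpa [mul_add] using (Nat.dvd_sub h (hM.mul_left i))
      exact absurd (Nat.le_of_dvd hi₀ hri) (Nat.not_le.2 hi)
    · exact .inl (Nat.lt_mul_ceilDiv_of_not_dvd hr h)
  have h₁ := Nat.le_mul_ceilDiv hr (i * (M + 1))
  have h₂ := Nat.le_mul_ceilDiv hr M
  have h₃ : (i + 1) * (M + 1) = i * (M + 1) + M + 1 := by ring
  rw [h₃, Nat.mul_add r]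
  omega

theorem card_filter_range_succ_mul_div_eq_or (hN : 0 < N) (hi : i < r) :
    ((range (N - 1)).filter fun v => (v + 1) * r / N = i).card = (N - 1) / r ∨
      ((range (N - 1)).filter fun v => (v + 1) * r / N = i).card = (N - 1) ⌈/⌉ r := by
  have hr : 0 < r := Nat.zero_lt_of_lt hi
  rw [card_filter_range_succ_mul_div_eq hr hN hi]
  rcases i.eq_zero_or_pos with rfl | hi₀
  · left
    rw [zero_mul, zero_ceilDiv, zero_add, one_mul, Nat.ceilDiv_eq_add_pred_div,
      show N + r - 1 = N - 1 + r by omega, Nat.add_div_right _ hr]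
    rfl
  · have h₁ : 1 ≤ i * N ⌈/⌉ r :=
      (Nat.lt_ceilDiv_iff_mul_lt hr).2 (by simpa using Nat.mul_pos hi₀ hN)
    have h₂ := div_le_ceilDiv_succ_mul_sub_ceilDiv_mul (N := N) (i := i) hr
    have h₃ := ceilDiv_succ_mul_sub_ceilDiv_mul_le hN hi₀ hi
    have h₄ := Nat.ceilDiv_le_div_add_one hr (N - 1)
    rw [max_eq_right h₁]
    omega

end Fiber

theorem stmt4_general (r b : ℕ) :
    ∀ i < r,
      ((Finset.range (2 ^ b - 1)).filter fun v => (v + 1) * r / 2 ^ b = i).card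
        = (2 ^ b - 1) / r ∨
      ((Finset.range (2 ^ b - 1)).filter fun v => (v + 1) * r / 2 ^ b = i).card
        = (2 ^ b - 1 + r - 1) / r :=
  fun _ hi => card_filter_range_succ_mul_div_eq_or (Nat.two_pow_pos b) hi

/-- Lemma 2 (iii): for positive integers `r` and `b` with `r ≤ 2^b`, the map
`v ↦ ⌊(v+1)·r/2^b⌋` is a most uniform map from `[2^b - 1]` to `[r]`: every `i ∈ [r]`
has either `⌊(2^b - 1)/r⌋` or `⌈(2^b - 1)/r⌉ = (2^b - 1 + r - 1)/r` preimages. -/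
theorem stmt4 (r b : ℕ) (hr : 0 < r) (hb : 0 < b) (hrb : r ≤ 2 ^ b) :
    ∀ i < r,
      ((Finset.range (2 ^ b - 1)).filter fun v => (v + 1) * r / 2 ^ b = i).card
        = (2 ^ b - 1) / r ∨
      ((Finset.range (2 ^ b - 1)).filter fun v => (v + 1) * r / 2 ^ b = i).card
        = (2 ^ b - 1 + r - 1) / r :=
  stmt4_general r b
end

section
/- Let b ≥ 2 and 1 ≤ r ≤ 2^{b−1}. Let h : [u] → [2^b] be a 4-universal random hash function, and define for each key x: j_x = h(x) mod 2^{b−1}, i(x) = ⌊r · j_x / 2^{b−1}⌋, a_x = ⌊h(x)/2^{b−1}⌋, and s(x) = 2·a_x − 1 ∈ {−1,1}. Then for any values f : [u] → ℤ, the Count Sketch estimator X satisfies E[X] = F₂ and Var[X] ≤ 2(F₂² − F₄)(1 + (r/2^b)²)/r ≤ 2F₂²(1 + (r/2^b)²)/r, where F₂ = Σ_x f(x)² and F₄ = Σ_x f(x)⁴. -/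
/-!
Expanding the square, `X = F₂ + Y` with `Y = ∑_{x ≠ y} f(x) f(y) s(x) s(y) [i(x) = i(y)]`.
Flipping the top bit of a hash value negates the sign `s` and keeps the bucket `i`; since the
hash values of any four keys are uniform, every term of `E[Y]` and of `E[Y²]` in which some key
occurs exactly once averages to zero. Hence `E[X] = F₂` and `Var[X] = E[Y²] = 2P(F₂² - F₄)`,
where `P` is the probability that two distinct keys share a bucket. The `r` buckets cut
`[2^(b-1)]` into intervals whose lengths differ by at most one, which gives
`P ≤ 1/r + r/4^b = (1 + (r/2^b)²)/r`.
-/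

open MeasureTheory ProbabilityTheory

namespace CountSketch

open Finset

section FiniteSums

variable {ι κ : Type*}

lemma sum_sq_sum_mul_ite_eq [DecidableEq κ] {s : Finset ι} {T : Finset κ} {t : ι → κ}
    (ht : ∀ x ∈ s, t x ∈ T) (c : ι → ℝ) :
    ∑ j ∈ T, (∑ x ∈ s, c x * if t x = j then 1 else 0) ^ 2 =
      ∑ x ∈ s, ∑ y ∈ s, c x * c y * if t x = t y then 1 else 0 := by
  simp_rw [sq, sum_mul_sum]
  rw [sum_comm]
  refine sum_congr rfl fun x hx => ?_
  rw [sum_comm]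
  refine sum_congr rfl fun y hy => ?_
  simp only [mul_ite, ite_mul, mul_one, mul_zero, zero_mul, sum_ite_eq, ht y hy, if_true]

lemma sum_sum_eq_sum_add_sum_offDiag {M : Type*} [AddCommMonoid M] [DecidableEq ι]
    (s : Finset ι) (F : ι → ι → M) :
    ∑ x ∈ s, ∑ y ∈ s, F x y = ∑ x ∈ s, F x x + ∑ p ∈ s.offDiag, F p.1 p.2 := by
  rw [← sum_product', ← diag_union_offDiag, sum_union (disjoint_diag_offDiag _), sum_diag]

lemma card_mul_sum_sq_le {s : Finset ι} {n : ι → ℝ} {q d : ℝ}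
    (hn : ∀ j ∈ s, n j = q ∨ n j = q + d) :
    #s * ∑ j ∈ s, n j ^ 2 ≤ (∑ j ∈ s, n j) ^ 2 + (#s * d) ^ 2 / 4 := by
  have hsq : ∑ j ∈ s, n j ^ 2 = (2 * q + d) * ∑ j ∈ s, n j - #s * (q * (q + d)) := by
    rw [mul_sum, ← nsmul_eq_mul, ← sum_const, ← sum_sub_distrib]
    refine sum_congr rfl fun j hj => ?_
    rcases hn j hj with h | h <;> rw [h] <;> ring
  rw [hsq]
  nlinarith [sq_nonneg (∑ j ∈ s, n j - #s * (q + d / 2))]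

lemma sum_eq_zero_of_comp_perm_eq_neg {α G : Type*} [Fintype α] [AddCommGroup G]
    [IsAddTorsionFree G] (σ : Equiv.Perm α) {g : α → G} (hg : ∀ v, g (σ v) = -g v) :
    ∑ v, g v = 0 := by
  have h := Equiv.sum_comp σ g
  simp only [hg, sum_neg_distrib] at h
  exact self_eq_neg.1 h.symm

lemma sum_offDiag_sq_mul_sq [DecidableEq ι] (s : Finset ι) (c : ι → ℝ) :
    ∑ p ∈ s.offDiag, c p.1 ^ 2 * c p.2 ^ 2 =
      (∑ x ∈ s, c x ^ 2) ^ 2 - ∑ x ∈ s, c x ^ 4 := by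
  rw [sq (∑ x ∈ s, _), sum_mul_sum, sum_sum_eq_sum_add_sum_offDiag]
  simp only [← pow_add]
  ring

end FiniteSums

section HashValues

variable {ι : Type*} {r m : ℕ}

def hashSign (m a : ℕ) : ℝ := 2 * ((a / m : ℕ) : ℝ) - 1

def hashBucket (r m a : ℕ) : ℕ := r * (a % m) / m

noncomputable def crossTerm (r m a c : ℕ) : ℝ :=
  hashSign m a * hashSign m c * if hashBucket r m a = hashBucket r m c then 1 else 0

def flipTop (m a : ℕ) : ℕ := if a < m then a + m else a - m

lemma hashBucket_lt (hr : 0 < r) (a : ℕ) : hashBucket r m a < r := by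
  rcases Nat.eq_zero_or_pos m with rfl | hm
  · simpa [hashBucket]
  · exact Nat.div_lt_of_lt_mul (by nlinarith [Nat.mod_lt a hm])

lemma hashSign_mul_self {a : ℕ} (ha : a < 2 * m) : hashSign m a * hashSign m a = 1 := by
  have : a / m < 2 := Nat.div_lt_of_lt_mul (by omega)
  interval_cases h : a / m <;> norm_num [hashSign, h]

lemma flipTop_lt {a : ℕ} (ha : a < 2 * m) : flipTop m a < 2 * m := by
  unfold flipTop; split_ifs <;> omega

lemma flipTop_flipTop {a : ℕ} (ha : a < 2 * m) : flipTop m (flipTop m a) = a := by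
  unfold flipTop; split_ifs <;> omega

lemma hashSign_flipTop {a : ℕ} (ha : a < 2 * m) : hashSign m (flipTop m a) = -hashSign m a := by
  have hm : 0 < m := by omega
  unfold flipTop hashSign
  split_ifs with h
  · rw [Nat.add_div_right _ hm, Nat.div_eq_of_lt h]; norm_num
  · rw [Nat.div_eq_of_lt (by omega : a - m < m),
      Nat.div_eq_of_lt_le (by omega : 1 * m ≤ a) (by omega : a < (1 + 1) * m)]
    norm_num

lemma hashBucket_flipTop (a : ℕ) : hashBucket r m (flipTop m a) = hashBucket r m a := by
  unfold flipTop hashBucket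
  split_ifs with h
  · rw [Nat.add_mod_right]
  · conv_rhs => rw [← Nat.sub_add_cancel (not_lt.1 h), Nat.add_mod_right]

lemma crossTerm_comm (a c : ℕ) : crossTerm r m a c = crossTerm r m c a := by
  simp only [crossTerm, eq_comm (a := hashBucket r m a)]; ring

lemma crossTerm_self {a : ℕ} (ha : a < 2 * m) : crossTerm r m a a = 1 := by
  simp [crossTerm, hashSign_mul_self ha]

lemma crossTerm_mul_self {a c : ℕ} (ha : a < 2 * m) (hc : c < 2 * m) :
    crossTerm r m a c * crossTerm r m a c =
      if hashBucket r m a = hashBucket r m c then 1 else 0 := by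
  have hsa := hashSign_mul_self ha
  have hsc := hashSign_mul_self hc
  unfold crossTerm
  split_ifs
  · linear_combination hashSign m c * hashSign m c * hsa + hsc
  · ring

lemma crossTerm_flipTop_left {a : ℕ} (ha : a < 2 * m) (c : ℕ) :
    crossTerm r m (flipTop m a) c = -crossTerm r m a c := by
  simp only [crossTerm, hashSign_flipTop ha, hashBucket_flipTop]; ring

lemma card_filter_mul_div_eq_or (hr : 0 < r) (hm : 0 < m) {j : ℕ} (hj : j < r) :
    #{k ∈ range m | r * k / m = j} = m / r ∨ #{k ∈ range m | r * k / m = j} = m / r + 1 := by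
  -- bucket `j` is the interval `[⌈jm/r⌉, ⌈(j+1)m/r⌉)`
  have hceil : ∀ N k, (N + (r - 1)) / r ≤ k ↔ N ≤ r * k := fun N k => by
    rw [Nat.div_le_iff_le_mul_add_pred hr]; omega
  have hfilter : {k ∈ range m | r * k / m = j} =
      Ico ((j * m + (r - 1)) / r) ((j * m + m + (r - 1)) / r) := by
    ext k
    have : r * k < r * m ↔ k < m := Nat.mul_lt_mul_left hr
    have : j * m + m ≤ r * m := by nlinarith
    simp only [mem_filter, mem_range, mem_Ico, hceil, ← not_le, Nat.div_eq_iff hm]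
    omega
  rw [hfilter, Nat.card_Ico, add_right_comm, Nat.add_div hr]
  generalize (j * m + (r - 1)) / r = c
  generalize m / r = q
  split_ifs <;> omega

lemma card_filter_hashBucket_eq (j : ℕ) :
    #{a ∈ range (2 * m) | hashBucket r m a = j} = 2 * #{k ∈ range m | r * k / m = j} := by
  simp only [card_filter, two_mul, sum_range_add, hashBucket, Nat.add_mod_left]
  refine congrArg₂ _ ?_ ?_ <;> exact sum_congr rfl fun k hk => by
    rw [Nat.mod_eq_of_lt (mem_range.1 hk)]

lemma card_mul_sum_collisions_le (hr : 0 < r) (hm : 0 < m) :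
    (r : ℝ) * ∑ a ∈ range (2 * m), ∑ c ∈ range (2 * m),
      (if hashBucket r m a = hashBucket r m c then 1 else 0) ≤ (2 * m) ^ 2 + r ^ 2 := by
  have hmaps : ∀ a ∈ range (2 * m), hashBucket r m a ∈ range r :=
    fun a _ => mem_range.2 (hashBucket_lt hr a)
  have hsizes : ∑ j ∈ range r, #{k ∈ range m | r * k / m = j} = m := by
    rw [← card_eq_sum_card_fiberwise fun k hk => ?_, card_range]
    simpa [hashBucket, Nat.mod_eq_of_lt (mem_range.1 hk)] using hmaps k (by simp at hk ⊢; omega)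
  have hbound := card_mul_sum_sq_le (s := range r)
    (n := fun j => ((#{a ∈ range (2 * m) | hashBucket r m a = j} : ℕ) : ℝ))
    (q := 2 * (m / r : ℕ)) (d := 2) fun j hj => by
      rcases card_filter_mul_div_eq_or hr hm (mem_range.1 hj) with h | h <;>
        simp [card_filter_hashBucket_eq, h]; ring
  have hsum := sum_sq_sum_mul_ite_eq hmaps fun _ => (1 : ℝ)
  simp only [one_mul] at hsum
  rw [← hsum]
  simp only [sum_boole, card_filter_hashBucket_eq, card_range] at hbound ⊢
  push_cast [← mul_sum] at hbound ⊢
  rw [← Nat.cast_sum, hsizes] at hbound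
  linarith

lemma sum_sq_sketch_eq [DecidableEq ι] (hr : 0 < r) {s : Finset ι} {a : ι → ℕ}
    (ha : ∀ x ∈ s, a x < 2 * m) (f : ι → ℝ) :
    ∑ j ∈ range r, (∑ x ∈ s, hashSign m (a x) * f x *
        if hashBucket r m (a x) = j then 1 else 0) ^ 2 =
      ∑ x ∈ s, f x ^ 2 +
        ∑ p ∈ s.offDiag, f p.1 * f p.2 * crossTerm r m (a p.1) (a p.2) := by
  rw [sum_sq_sum_mul_ite_eq (fun x _ => mem_range.2 (hashBucket_lt hr (a x))),
    sum_sum_eq_sum_add_sum_offDiag]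
  congr 1
  · refine sum_congr rfl fun x hx => ?_
    rw [if_pos rfl]
    linear_combination f x ^ 2 * hashSign_mul_self (ha x hx)
  · refine sum_congr rfl fun p _ => ?_
    unfold crossTerm; ring

end HashValues

section UniversalHashing

variable {Ω ι β : Type*} [MeasurableSpace Ω] {μ : Measure Ω}

def IsUniversal [Fintype β] (k : ℕ) (h : Ω → ι → β) (μ : Measure Ω) : Prop :=
  ∀ j ≤ k, ∀ x : Fin j → ι, Function.Injective x → ∀ y : Fin j → β,
    μ {ω | ∀ m, h ω (x m) = y m} = (Fintype.card β : ENNReal)⁻¹ ^ j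

lemma integral_comp_eq_mul_sum [IsFiniteMeasure μ] {α : Type*} [Fintype α] [MeasurableSpace α]
    [MeasurableSingletonClass α] {V : Ω → α} (hV : Measurable V) {p : ENNReal}
    (hp : ∀ a, μ (V ⁻¹' {a}) = p) (g : α → ℝ) :
    ∫ ω, g (V ω) ∂μ = p.toReal * ∑ a, g a := by
  rw [← integral_map hV.aemeasurable (measurable_of_finite g).aestronglyMeasurable,
    integral_fintype Integrable.of_finite, mul_sum]
  simp [Measure.real, Measure.map_apply hV (measurableSet_singleton _), hp]

lemma integrable_comp_of_finite [IsFiniteMeasure μ] {α : Type*} [Finite α] [MeasurableSpace α]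
    [MeasurableSingletonClass α] {V : Ω → α} (hV : Measurable V) (g : α → ℝ) :
    Integrable (fun ω => g (V ω)) μ :=
  Integrable.of_finite.comp_measurable hV

variable [Fintype β] [MeasurableSpace β] [MeasurableSingletonClass β] [IsFiniteMeasure μ]
  {k : ℕ} {h : Ω → ι → β}

lemma IsUniversal.integral_comp_restrict [DecidableEq ι] (hU : IsUniversal k h μ)
    (hmeas : ∀ x, Measurable fun ω => h ω x) {K : Finset ι} (hK : #K ≤ k)
    (g : (K → β) → ℝ) :
    ∫ ω, g (fun x => h ω x) ∂μ = (Fintype.card β : ℝ)⁻¹ ^ #K * ∑ v, g v := by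
  have hp (v : K → β) :
      μ ((fun ω (x : K) => h ω x) ⁻¹' {v}) = (Fintype.card β : ENNReal)⁻¹ ^ #K := by
    convert hU #K hK (fun m => K.equivFin.symm m)
      (Subtype.val_injective.comp K.equivFin.symm.injective) (fun m => v (K.equivFin.symm m))
    ext ω
    simp only [Set.mem_preimage, Set.mem_singleton_iff, funext_iff, Set.mem_ofPred_eq]
    exact (K.equivFin.symm.forall_congr_right (q := fun x : K => h ω x = v x)).symm
  rw [integral_comp_eq_mul_sum (measurable_pi_lambda _ fun x : K => hmeas x) hp g]
  simp

lemma IsUniversal.integral_comp_pair (hU : IsUniversal k h μ)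
    (hmeas : ∀ x, Measurable fun ω => h ω x) (hk : 2 ≤ k) {x y : ι} (hxy : x ≠ y)
    (g : β → β → ℝ) :
    ∫ ω, g (h ω x) (h ω y) ∂μ = (Fintype.card β : ℝ)⁻¹ ^ 2 * ∑ a, ∑ c, g a c := by
  have hp (p : β × β) :
      μ ((fun ω => (h ω x, h ω y)) ⁻¹' {p}) = (Fintype.card β : ENNReal)⁻¹ ^ 2 := by
    convert hU 2 hk ![x, y] (by simp [Function.Injective, Fin.forall_fin_two, hxy, hxy.symm])
      ![p.1, p.2]
    ext ω
    simp [Prod.ext_iff, Fin.forall_fin_two]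
  rw [integral_comp_eq_mul_sum ((hmeas x).prodMk (hmeas y)) hp (fun p => g p.1 p.2),
    Fintype.sum_prod_type]
  simp

lemma IsUniversal.integral_eq_zero_of_update_eq_neg [DecidableEq ι]
    (hU : IsUniversal k h μ) (hmeas : ∀ x, Measurable fun ω => h ω x) {K : Finset ι}
    (hK : #K ≤ k) (z : K) (τ : Equiv.Perm β) {g : (K → β) → ℝ}
    (hg : ∀ v, g (Function.update v z (τ (v z))) = -g v) :
    ∫ ω, g (fun x => h ω x) ∂μ = 0 := by
  let σ : Equiv.Perm (K → β) :=
    { toFun := fun v => Function.update v z (τ (v z))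
      invFun := fun v => Function.update v z (τ.symm (v z))
      left_inv := fun v => by simp
      right_inv := fun v => by simp }
  rw [hU.integral_comp_restrict hmeas hK, sum_eq_zero_of_comp_perm_eq_neg σ hg, mul_zero]

end UniversalHashing

section Moments

variable {Ω : Type*} [MeasurableSpace Ω] {μ : Measure Ω} [IsFiniteMeasure μ]
  {u n m r : ℕ} {h : Ω → Fin u → Fin n}

def flipTopPerm (hn : n = 2 * m) : Equiv.Perm (Fin n) :=
  Function.Involutive.toPerm
    (fun a => ⟨flipTop m a, by have := flipTop_lt (m := m) (a := a); omega⟩)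
    fun a => Fin.ext (flipTop_flipTop (by omega))

lemma crossTerm_flipTopPerm_left (hn : n = 2 * m) (a : Fin n) (c : ℕ) :
    crossTerm r m (flipTopPerm hn a) c = -crossTerm r m a c :=
  crossTerm_flipTop_left (by omega) c

noncomputable def collisionProb (r m n : ℕ) : ℝ :=
  (n : ℝ)⁻¹ ^ 2 *
    ∑ a : Fin n, ∑ c : Fin n, if hashBucket r m a = hashBucket r m c then 1 else 0

lemma collisionProb_le (hr : 0 < r) (hm : 0 < m) (hn : n = 2 * m) :
    collisionProb r m n ≤ (1 + ((r : ℝ) / n) ^ 2) / r := by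
  have hcount := card_mul_sum_collisions_le hr hm
  have hinner (a : ℕ) := Fin.sum_univ_eq_sum_range
    (fun c => if hashBucket r m a = hashBucket r m c then (1 : ℝ) else 0) n
  simp only [collisionProb, hinner, Fin.sum_univ_eq_sum_range
    (fun a => ∑ c ∈ range n, if hashBucket r m a = hashBucket r m c then (1 : ℝ) else 0)]
  subst hn
  have hr' : (0 : ℝ) < r := by exact_mod_cast hr
  have hm' : (0 : ℝ) < m := by exact_mod_cast hm
  rw [le_div_iff₀ hr']
  push_cast
  field_simp
  nlinarith

lemma integral_crossTerm_mul_crossTerm_eq_zero (hU : IsUniversal 4 h μ)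
    (hmeas : ∀ x, Measurable fun ω => h ω x) (hn : n = 2 * m) {x y x' y' : Fin u}
    (hy : x ≠ y) (hx' : x ≠ x') (hy' : x ≠ y') :
    ∫ ω, crossTerm r m (h ω x) (h ω y) * crossTerm r m (h ω x') (h ω y') ∂μ = 0 := by
  let K : Finset (Fin u) := {x, y, x', y'}
  have hmem : x ∈ K ∧ y ∈ K ∧ x' ∈ K ∧ y' ∈ K := by simp [K]
  exact hU.integral_eq_zero_of_update_eq_neg hmeas card_le_four ⟨x, hmem.1⟩ (flipTopPerm hn)
    (g := fun v => crossTerm r m (v ⟨x, hmem.1⟩) (v ⟨y, hmem.2.1⟩) *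
      crossTerm r m (v ⟨x', hmem.2.2.1⟩) (v ⟨y', hmem.2.2.2⟩))
    fun v => by simp [hy.symm, hx'.symm, hy'.symm, crossTerm_flipTopPerm_left]

lemma integral_crossTerm_eq_zero (hU : IsUniversal 4 h μ)
    (hmeas : ∀ x, Measurable fun ω => h ω x) (hn : n = 2 * m) {x y : Fin u} (hxy : x ≠ y) :
    ∫ ω, crossTerm r m (h ω x) (h ω y) ∂μ = 0 := by
  have hself (ω : Ω) : crossTerm r m (h ω y) (h ω y) = 1 := crossTerm_self (by omega)
  simpa [hself] using
    integral_crossTerm_mul_crossTerm_eq_zero (r := r) (μ := μ) hU hmeas hn hxy hxy hxy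

lemma integral_crossTerm_mul_self (hU : IsUniversal 4 h μ)
    (hmeas : ∀ x, Measurable fun ω => h ω x) (hn : n = 2 * m) {x y : Fin u} (hxy : x ≠ y) :
    ∫ ω, crossTerm r m (h ω x) (h ω y) * crossTerm r m (h ω x) (h ω y) ∂μ =
      collisionProb r m n := by
  rw [hU.integral_comp_pair hmeas (by norm_num) hxy
    (fun a c => crossTerm r m a c * crossTerm r m a c)]
  simp only [collisionProb, Fintype.card_fin]
  congr 1
  exact sum_congr rfl fun a _ => sum_congr rfl fun c _ =>
    crossTerm_mul_self (by omega) (by omega)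

lemma integral_crossTerm_mul_crossTerm (hU : IsUniversal 4 h μ)
    (hmeas : ∀ x, Measurable fun ω => h ω x) (hn : n = 2 * m) {p q : Fin u × Fin u}
    (hp : p.1 ≠ p.2) (hq : q.1 ≠ q.2) :
    ∫ ω, crossTerm r m (h ω p.1) (h ω p.2) * crossTerm r m (h ω q.1) (h ω q.2) ∂μ =
      (if q = p then collisionProb r m n else 0) +
        (if q = p.swap then collisionProb r m n else 0) := by
  obtain ⟨x, y⟩ := p
  obtain ⟨x', y'⟩ := q
  have hcomm (ω : Ω) : crossTerm r m (h ω x) (h ω y) = crossTerm r m (h ω y) (h ω x) :=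
    crossTerm_comm _ _
  simp only [Prod.mk.injEq, Prod.swap_prod_mk] at hp hq ⊢
  by_cases hsame : x' = x ∧ y' = y
  · obtain ⟨rfl, rfl⟩ := hsame
    simp [hp, integral_crossTerm_mul_self hU hmeas hn hp]
  by_cases hswap : x' = y ∧ y' = x
  · obtain ⟨rfl, rfl⟩ := hswap
    simp_rw [hcomm]
    simp [hp, integral_crossTerm_mul_self hU hmeas hn hp.symm]
  rw [if_neg hsame, if_neg hswap, add_zero]
  by_cases hx : x ≠ x' ∧ x ≠ y'
  · exact integral_crossTerm_mul_crossTerm_eq_zero hU hmeas hn hp hx.1 hx.2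
  · -- `y` occurs only once among `x, y, x', y'`
    simp_rw [hcomm]
    exact integral_crossTerm_mul_crossTerm_eq_zero hU hmeas hn hp.symm (by grind) (by grind)

lemma integrable_sum_offDiag_crossTerm (hmeas : ∀ x, Measurable fun ω => h ω x)
    (c : Fin u → ℝ) :
    Integrable (fun ω => ∑ p ∈ univ.offDiag, c p.1 * c p.2 *
      crossTerm r m (h ω p.1) (h ω p.2)) μ :=
  integrable_comp_of_finite (measurable_pi_lambda _ hmeas)
    fun w => ∑ p ∈ univ.offDiag, c p.1 * c p.2 * crossTerm r m (w p.1) (w p.2)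

lemma integral_sum_offDiag_crossTerm (hU : IsUniversal 4 h μ)
    (hmeas : ∀ x, Measurable fun ω => h ω x) (hn : n = 2 * m) (c : Fin u → ℝ) :
    ∫ ω, ∑ p ∈ univ.offDiag, c p.1 * c p.2 * crossTerm r m (h ω p.1) (h ω p.2) ∂μ =
      0 := by
  rw [integral_finsetSum _ fun p _ => integrable_comp_of_finite (measurable_pi_lambda _ hmeas)
    fun w => c p.1 * c p.2 * crossTerm r m (w p.1) (w p.2)]
  refine sum_eq_zero fun p hp => ?_
  rw [integral_const_mul, integral_crossTerm_eq_zero hU hmeas hn (mem_offDiag.1 hp).2.2,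
    mul_zero]

lemma integral_sq_sum_offDiag_crossTerm (hU : IsUniversal 4 h μ)
    (hmeas : ∀ x, Measurable fun ω => h ω x) (hn : n = 2 * m) (c : Fin u → ℝ) :
    ∫ ω, (∑ p ∈ univ.offDiag, c p.1 * c p.2 *
        crossTerm r m (h ω p.1) (h ω p.2)) ^ 2 ∂μ =
      2 * collisionProb r m n * ∑ p ∈ univ.offDiag, c p.1 ^ 2 * c p.2 ^ 2 := by
  have hterm (p q : Fin u × Fin u) (hp : p ∈ univ.offDiag) (hq : q ∈ univ.offDiag) :
      ∫ ω, c p.1 * c p.2 * crossTerm r m (h ω p.1) (h ω p.2) *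
          (c q.1 * c q.2 * crossTerm r m (h ω q.1) (h ω q.2)) ∂μ =
        c p.1 * c p.2 * (c q.1 * c q.2) * ((if q = p then collisionProb r m n else 0) +
          (if q = p.swap then collisionProb r m n else 0)) := by
    rw [← integral_crossTerm_mul_crossTerm hU hmeas hn (mem_offDiag.1 hp).2.2
      (mem_offDiag.1 hq).2.2, ← integral_const_mul]
    congr 1 with ω
    ring
  have hV := measurable_pi_lambda _ hmeas
  simp_rw [sq, sum_mul_sum]
  rw [integral_finsetSum _ fun p _ => integrable_finsetSum _ fun q _ => integrable_comp_of_finite hV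
    fun w => c p.1 * c p.2 * crossTerm r m (w p.1) (w p.2) *
      (c q.1 * c q.2 * crossTerm r m (w q.1) (w q.2))]
  rw [mul_sum]
  refine sum_congr rfl fun p hp => ?_
  have hswap : p.swap ∈ univ.offDiag := by simpa [mem_offDiag, eq_comm] using hp
  rw [integral_finsetSum _ fun q _ => integrable_comp_of_finite hV
    fun w => c p.1 * c p.2 * crossTerm r m (w p.1) (w p.2) *
      (c q.1 * c q.2 * crossTerm r m (w q.1) (w q.2)),
    sum_congr rfl (hterm p · hp)]
  simp only [mul_add, mul_ite, mul_zero, sum_add_distrib, sum_ite_eq', hp, hswap, if_true,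
    Prod.fst_swap, Prod.snd_swap]
  ring

end Moments

section Estimator

variable {Ω : Type*} [MeasurableSpace Ω] {μ : Measure Ω} [IsProbabilityMeasure μ]
  {u n m r : ℕ} {h : Ω → Fin u → Fin n}

lemma integral_const_add_sum_offDiag_crossTerm (hU : IsUniversal 4 h μ)
    (hmeas : ∀ x, Measurable fun ω => h ω x) (hn : n = 2 * m) (a : ℝ) (c : Fin u → ℝ) :
    ∫ ω, a + ∑ p ∈ univ.offDiag, c p.1 * c p.2 * crossTerm r m (h ω p.1) (h ω p.2) ∂μ =
      a := by
  rw [integral_add (integrable_const a) (integrable_sum_offDiag_crossTerm hmeas c),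
    integral_sum_offDiag_crossTerm hU hmeas hn c]
  simp

lemma variance_const_add_sum_offDiag_crossTerm (hU : IsUniversal 4 h μ)
    (hmeas : ∀ x, Measurable fun ω => h ω x) (hn : n = 2 * m) (a : ℝ) (c : Fin u → ℝ) :
    variance (fun ω => a + ∑ p ∈ univ.offDiag, c p.1 * c p.2 *
        crossTerm r m (h ω p.1) (h ω p.2)) μ =
      2 * collisionProb r m n * ∑ p ∈ univ.offDiag, c p.1 ^ 2 * c p.2 ^ 2 := by
  rw [variance_eq_integral (by fun_prop), integral_const_add_sum_offDiag_crossTerm hU hmeas hn]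
  simp_rw [add_sub_cancel_left]
  exact integral_sq_sum_offDiag_crossTerm hU hmeas hn c

end Estimator

end CountSketch

theorem stmt19_general
    {Ω : Type*} [MeasureSpace Ω] [IsProbabilityMeasure (ℙ : Measure Ω)]
    (b u r : ℕ) (hb : 2 ≤ b) (hr : 1 ≤ r)
    (h : Ω → Fin u → Fin (2 ^ b))
    (hmeas : ∀ x : Fin u, Measurable fun ω => h ω x)
    (huniv : ∀ j : ℕ, j ≤ 4 → ∀ x : Fin j → Fin u, Function.Injective x →
      ∀ y : Fin j → Fin (2 ^ b),
        ℙ {ω | ∀ m : Fin j, h ω (x m) = y m} = ((2 ^ b : ℕ) : ENNReal)⁻¹ ^ j)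
    (i : Ω → Fin u → ℕ)
    (hi : ∀ ω x, i ω x = r * ((h ω x : ℕ) % 2 ^ (b - 1)) / 2 ^ (b - 1))
    (s : Ω → Fin u → ℝ)
    (hs : ∀ ω x, s ω x = 2 * (((h ω x : ℕ) / 2 ^ (b - 1) : ℕ) : ℝ) - 1)
    (f : Fin u → ℤ)
    (X : Ω → ℝ)
    (hX : ∀ ω, X ω = ∑ j ∈ Finset.range r,
      (∑ x : Fin u, s ω x * (f x : ℝ) * (if i ω x = j then 1 else 0)) ^ 2)
    (F₂ F₄ : ℝ) (hF₂ : F₂ = ∑ x : Fin u, (f x : ℝ) ^ 2)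
    (hF₄ : F₄ = ∑ x : Fin u, (f x : ℝ) ^ 4) :
    (∫ ω, X ω) = F₂ ∧
    variance X ℙ ≤ 2 * (F₂ ^ 2 - F₄) * (1 + ((r : ℝ) / 2 ^ b) ^ 2) / r ∧
    2 * (F₂ ^ 2 - F₄) * (1 + ((r : ℝ) / 2 ^ b) ^ 2) / r
      ≤ 2 * F₂ ^ 2 * (1 + ((r : ℝ) / 2 ^ b) ^ 2) / r := by
  open CountSketch Finset in
  set m := 2 ^ (b - 1)
  have hm : 0 < m := by positivity
  have hn : 2 ^ b = 2 * m := by rw [← pow_succ']; congr 1; omega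
  have hU : IsUniversal 4 h ℙ := fun j hj x hx y => by simpa using huniv j hj x hx y
  have hXY (ω : Ω) : X ω = F₂ + ∑ p ∈ univ.offDiag,
      (f p.1 : ℝ) * f p.2 * crossTerm r m (h ω p.1) (h ω p.2) := by
    rw [hX, hF₂, ← sum_sq_sketch_eq hr fun x _ => (by omega : (h ω x : ℕ) < 2 * m)]
    simp only [hi, hs]
    rfl
  obtain rfl : X = _ := funext hXY
  have hoff : F₂ ^ 2 - F₄ = ∑ p ∈ univ.offDiag, (f p.1 : ℝ) ^ 2 * (f p.2 : ℝ) ^ 2 := by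
    rw [hF₂, hF₄, sum_offDiag_sq_mul_sq _ fun x => (f x : ℝ)]
  have hP := collisionProb_le (r := r) hr hm hn
  push_cast at hP
  refine ⟨integral_const_add_sum_offDiag_crossTerm hU hmeas hn _ fun x => f x, ?_, ?_⟩
  · rw [variance_const_add_sum_offDiag_crossTerm hU hmeas hn _ fun x => f x, ← hoff,
      mul_div_assoc, mul_right_comm]
    gcongr
    exact hoff ▸ by positivity
  · have hF₄_nonneg : 0 ≤ F₄ := hF₄ ▸ sum_nonneg fun x _ => by positivity
    gcongr
    linarith

/-- Eq. (22) (two-for-one Count Sketch from uniform `b`-bit hashing, arbitrary number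
of buckets): with `b ≥ 2`, `1 ≤ r ≤ 2^(b-1)`, `h : [u] → [2^b]` 4-universal,
`j_x = h(x) mod 2^(b-1)`, `i(x) = ⌊r·j_x/2^(b-1)⌋`, `s(x) = 2⌊h(x)/2^(b-1)⌋ - 1`,
the Count Sketch estimator `X` satisfies `E[X] = F₂` and
`Var[X] ≤ 2(F₂² - F₄)(1 + (r/2^b)²)/r ≤ 2F₂²(1 + (r/2^b)²)/r`. -/
theorem stmt19
    {Ω : Type*} [MeasureSpace Ω] [IsProbabilityMeasure (ℙ : Measure Ω)]
    (b u r : ℕ) (hb : 2 ≤ b) (hr : 1 ≤ r) (hrb : r ≤ 2 ^ (b - 1))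
    (h : Ω → Fin u → Fin (2 ^ b))
    (hmeas : ∀ x : Fin u, Measurable fun ω => h ω x)
    (huniv : ∀ j : ℕ, j ≤ 4 → ∀ x : Fin j → Fin u, Function.Injective x →
      ∀ y : Fin j → Fin (2 ^ b),
        ℙ {ω | ∀ m : Fin j, h ω (x m) = y m} = ((2 ^ b : ℕ) : ENNReal)⁻¹ ^ j)
    (i : Ω → Fin u → ℕ)
    (hi : ∀ ω x, i ω x = r * ((h ω x : ℕ) % 2 ^ (b - 1)) / 2 ^ (b - 1))
    (s : Ω → Fin u → ℝ)
    (hs : ∀ ω x, s ω x = 2 * (((h ω x : ℕ) / 2 ^ (b - 1) : ℕ) : ℝ) - 1)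
    (f : Fin u → ℤ)
    (X : Ω → ℝ)
    (hX : ∀ ω, X ω = ∑ j ∈ Finset.range r,
      (∑ x : Fin u, s ω x * (f x : ℝ) * (if i ω x = j then 1 else 0)) ^ 2)
    (F₂ F₄ : ℝ) (hF₂ : F₂ = ∑ x : Fin u, (f x : ℝ) ^ 2)
    (hF₄ : F₄ = ∑ x : Fin u, (f x : ℝ) ^ 4) :
    (∫ ω, X ω) = F₂ ∧
    variance X ℙ ≤ 2 * (F₂ ^ 2 - F₄) * (1 + ((r : ℝ) / 2 ^ b) ^ 2) / r ∧
    2 * (F₂ ^ 2 - F₄) * (1 + ((r : ℝ) / 2 ^ b) ^ 2) / r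
      ≤ 2 * F₂ ^ 2 * (1 + ((r : ℝ) / 2 ^ b) ^ 2) / r :=
  stmt19_general b u r hb hr h hmeas huniv i hi s hs f X hX F₂ F₄ hF₂ hF₄
end
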